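/- arXiv:1505.02532 — 3 statements merged into one kernel-verified Lean document; each statement's English description precedes it below -/
import Mathlib

section
/- Let k be a field, R = k[X_0,...,X_{m-1}], and F, G finite subsets of R with the same k-linear span. If i ≥ deg(F) (the maximum degree of an element of F), then V_{F,i} = V_{G,i}. -/
/-!
If every element of `B` has degree at most `i`, then `V_{B,i}` is a subspace containing `B`, hence
`span B`; being closed under multiplication, it then satisfies the defining conditions of `V_{A,i}`
whenever `span A ≤ span B`. Since `span F = span G` and the degree bound passes from `F` to its
span, this applies in both directions.
-/

/-- `VSpace F i` is the smallest `k`-subspace of `k[X_0,...,X_{m-1}]` containing all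
`f ∈ F` of total degree at most `i`, and closed under multiplication by arbitrary
polynomials as long as the product has total degree at most `i`. -/
noncomputable def VSpace {k : Type*} [Field k] {m : ℕ} (F : Set (MvPolynomial (Fin m) k)) (i : ℕ) :
    Submodule k (MvPolynomial (Fin m) k) :=
  sInf {W : Submodule k (MvPolynomial (Fin m) k) |
    (∀ f ∈ F, f.totalDegree ≤ i → f ∈ W) ∧
    ∀ g ∈ W, ∀ h : MvPolynomial (Fin m) k, (h * g).totalDegree ≤ i → h * g ∈ W}

/-- The last fall degree `d_F`: the minimal `d` such that every `f` in the ideal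
generated by `F` lies in `VSpace F (max d (deg f))` (`sInf ∅ = 0` by convention). -/
noncomputable def lastFallDegree {k : Type*} [Field k] {m : ℕ}
    (F : Set (MvPolynomial (Fin m) k)) : ℕ :=
  sInf {d : ℕ | ∀ f ∈ Ideal.span F, f ∈ VSpace F (max d f.totalDegree)}

theorem MvPolynomial.totalDegree_le_of_mem_span {σ R : Type*} [CommSemiring R]
    {F : Set (MvPolynomial σ R)} {i : ℕ} (hF : ∀ f ∈ F, f.totalDegree ≤ i)
    {g : MvPolynomial σ R} (hg : g ∈ Submodule.span R F) : g.totalDegree ≤ i := by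
  have hle : Submodule.span R F ≤ MvPolynomial.restrictTotalDegree σ R i :=
    Submodule.span_le.mpr fun f hf => (MvPolynomial.mem_restrictTotalDegree _ _ _).mpr (hF f hf)
  exact (MvPolynomial.mem_restrictTotalDegree _ _ _).mp (hle hg)

section VSpace

variable {k : Type*} [Field k] {m : ℕ} {F : Set (MvPolynomial (Fin m) k)} {i : ℕ}

theorem VSpace_le {W : Submodule k (MvPolynomial (Fin m) k)}
    (hF : ∀ f ∈ F, f.totalDegree ≤ i → f ∈ W)
    (hmul : ∀ g ∈ W, ∀ h : MvPolynomial (Fin m) k, (h * g).totalDegree ≤ i → h * g ∈ W) :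
    VSpace F i ≤ W :=
  sInf_le ⟨hF, hmul⟩

theorem mem_VSpace_of_mem {f : MvPolynomial (Fin m) k} (hf : f ∈ F) (hd : f.totalDegree ≤ i) :
    f ∈ VSpace F i :=
  Submodule.mem_sInf.mpr fun _ hW => hW.1 f hf hd

theorem mul_mem_VSpace {g : MvPolynomial (Fin m) k} (hg : g ∈ VSpace F i)
    (h : MvPolynomial (Fin m) k) (hd : (h * g).totalDegree ≤ i) : h * g ∈ VSpace F i :=
  Submodule.mem_sInf.mpr fun W hW => hW.2 g (Submodule.mem_sInf.mp hg W hW) h hd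

theorem span_le_VSpace (hF : ∀ f ∈ F, f.totalDegree ≤ i) : Submodule.span k F ≤ VSpace F i :=
  Submodule.span_le.mpr fun f hf => mem_VSpace_of_mem hf (hF f hf)

theorem VSpace_le_VSpace_of_span_le {G : Set (MvPolynomial (Fin m) k)}
    (hG : ∀ g ∈ G, g.totalDegree ≤ i) (hspan : Submodule.span k F ≤ Submodule.span k G) :
    VSpace F i ≤ VSpace G i :=
  VSpace_le (fun _ hf _ => span_le_VSpace hG (hspan (Submodule.subset_span hf)))
    fun _ hg h hd => mul_mem_VSpace hg h hd

end VSpace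

theorem VSpace_eq_of_span_eq_general {k : Type*} [Field k] {m : ℕ}
    (F G : Set (MvPolynomial (Fin m) k))
    (hspan : Submodule.span k F = Submodule.span k G) (i : ℕ)
    (hi : ∀ f ∈ F, f.totalDegree ≤ i) :
    VSpace F i = VSpace G i := by
  have hG : ∀ g ∈ G, g.totalDegree ≤ i := fun g hg =>
    MvPolynomial.totalDegree_le_of_mem_span hi (hspan ▸ Submodule.subset_span hg)
  exact le_antisymm (VSpace_le_VSpace_of_span_le hG hspan.le)
    (VSpace_le_VSpace_of_span_le hi hspan.ge)

/-- If `F` and `G` have the same `k`-linear span and `i ≥ deg F`,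
then `VSpace F i = VSpace G i`. -/
theorem VSpace_eq_of_span_eq {k : Type*} [Field k] {m : ℕ}
    (F G : Set (MvPolynomial (Fin m) k)) (hF : F.Finite) (hG : G.Finite)
    (hspan : Submodule.span k F = Submodule.span k G) (i : ℕ)
    (hi : ∀ f ∈ F, f.totalDegree ≤ i) :
    VSpace F i = VSpace G i :=
  VSpace_eq_of_span_eq_general F G hspan i hi
end

section
/- Let k be a field and F a finite subset of R generating ideal I, with last fall degree d_F. Then for every i ≥ d_F, V_{F,i} = I ∩ R_{≤i}, and d_F equals the largest c ≥ 0 such that V_{F,c} ∩ R_{≤ c-1} ≠ V_{F,c-1} (with V_{F,-1} = ∅ by convention, and the largest such c taken to be 0 if none exists). -/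
/-!
Existence of a last fall degree is a Noetherian argument on leading forms. Every `f ∈ I = ⟨F⟩`
lies in some `V_{F,i}`, so the ideals generated by the leading forms of the `V_{F,i}` form an
ascending chain exhausting the leading forms of `I`; it stabilises at some `d`. The polynomials
whose degree-`n` homogeneous component is, for every `n`, the degree-`n` component of an element
of `V_{F,max d n} ∩ R_{≤n}` form an ideal containing that stable ideal. So the leading form of
any `f ∈ I` is cancelled by an element of `V_{F,max d (deg f)}`, and induction on the degree
gives `f ∈ V_{F,max d (deg f)}`.

Once `d_F` exists, `V_{F,i} = I ∩ R_{≤i}` for `i ≥ d_F` rules out jumps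
`V_{F,c} ∩ R_{≤c-1} ≠ V_{F,c-1}` with `c > d_F`; conversely, if no jump occurs above `j`, membership descends from `V_{F,max d_F (deg f)}` to
`V_{F,max j (deg f)}` one degree at a time.
-/

namespace MvPolynomial

variable {σ R : Type*} [CommSemiring R]

attribute [local instance] gradedAlgebra in
theorem homogeneousComponent_mul_of_isHomogeneous_left {H : MvPolynomial σ R} {a : ℕ}
    (hH : H.IsHomogeneous a) (p : MvPolynomial σ R) (n : ℕ) :
    homogeneousComponent n (H * p) = if a ≤ n then H * homogeneousComponent (n - a) p else 0 := by
  simp only [← decomposition.decompose'_apply]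
  exact DirectSum.coe_decompose_mul_of_left_mem _ n ((mem_homogeneousSubmodule a H).2 hH)

noncomputable def leadingForm (p : MvPolynomial σ R) : MvPolynomial σ R :=
  homogeneousComponent p.totalDegree p

theorem leadingForm_isHomogeneous (p : MvPolynomial σ R) :
    (leadingForm p).IsHomogeneous p.totalDegree :=
  homogeneousComponent_isHomogeneous _ _

theorem leadingForm_ne_zero {p : MvPolynomial σ R} (hp : p ≠ 0) : leadingForm p ≠ 0 := by
  obtain ⟨s, hs, hdeg⟩ := Finset.exists_mem_eq_sup p.support (support_nonempty.2 hp)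
    fun s => s.sum fun _ e => e
  have hs_deg : s.degree = p.totalDegree := by
    rw [totalDegree, hdeg]
    rfl
  intro h
  have := congrArg (coeff s) h
  rw [leadingForm, coeff_homogeneousComponent, if_pos hs_deg, coeff_zero] at this
  exact mem_support_iff.1 hs this

theorem totalDegree_lt_of_homogeneousComponent_eq_zero {p : MvPolynomial σ R} {n : ℕ}
    (hp : p.totalDegree ≤ n) (hn : homogeneousComponent n p = 0) (hp0 : p ≠ 0) :
    p.totalDegree < n :=
  hp.lt_of_ne fun h => leadingForm_ne_zero hp0 (by rwa [leadingForm, h])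

end MvPolynomial

open MvPolynomial

namespace VSpace

variable {k : Type*} [Field k] {m : ℕ} {F : Set (MvPolynomial (Fin m) k)}

theorem mem_of_mem {f : MvPolynomial (Fin m) k} (hf : f ∈ F) {i : ℕ} (hdeg : f.totalDegree ≤ i) :
    f ∈ VSpace F i :=
  Submodule.mem_sInf.2 fun _ hW => hW.1 f hf hdeg

theorem mul_mem {g : MvPolynomial (Fin m) k} {i : ℕ} (hg : g ∈ VSpace F i)
    (h : MvPolynomial (Fin m) k) (hdeg : (h * g).totalDegree ≤ i) : h * g ∈ VSpace F i :=
  Submodule.mem_sInf.2 fun W hW => hW.2 g (Submodule.mem_sInf.1 hg W hW) h hdeg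

theorem mono : Monotone (VSpace F) := fun _ _ hij =>
  sInf_le ⟨fun _ hf hdeg => mem_of_mem hf (hdeg.trans hij),
    fun _ hg h hdeg => mul_mem hg h (hdeg.trans hij)⟩

theorem le_span_inf_restrictTotalDegree (i : ℕ) :
    VSpace F i ≤ (Ideal.span F).restrictScalars k ⊓ restrictTotalDegree (Fin m) k i :=
  sInf_le ⟨fun _ hf hdeg => ⟨Ideal.subset_span hf, (mem_restrictTotalDegree ..).2 hdeg⟩,
    fun _ hg h hdeg => ⟨Ideal.mul_mem_left _ h hg.1, (mem_restrictTotalDegree ..).2 hdeg⟩⟩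

theorem mem_span {f : MvPolynomial (Fin m) k} {i : ℕ} (hf : f ∈ VSpace F i) :
    f ∈ Ideal.span F :=
  (le_span_inf_restrictTotalDegree i hf).1

theorem totalDegree_le {f : MvPolynomial (Fin m) k} {i : ℕ} (hf : f ∈ VSpace F i) :
    f.totalDegree ≤ i :=
  (mem_restrictTotalDegree ..).1 (le_span_inf_restrictTotalDegree i hf).2

theorem exists_mem_of_mem_span {f : MvPolynomial (Fin m) k} (hf : f ∈ Ideal.span F) :
    ∃ i, f ∈ VSpace F i := by
  induction hf using Submodule.span_induction with
  | mem f hf => exact ⟨f.totalDegree, mem_of_mem hf le_rfl⟩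
  | zero => exact ⟨0, zero_mem _⟩
  | add f g _ _ hf hg =>
    obtain ⟨i, hi⟩ := hf
    obtain ⟨j, hj⟩ := hg
    exact ⟨max i j, add_mem (mono (le_max_left i j) hi) (mono (le_max_right i j) hj)⟩
  | smul r f _ hf =>
    obtain ⟨i, hi⟩ := hf
    exact ⟨max i (r * f).totalDegree,
      mul_mem (mono (le_max_left _ _) hi) r (le_max_right _ _)⟩

variable (F) in
noncomputable def leadingFormIdeal (i : ℕ) : Ideal (MvPolynomial (Fin m) k) :=
  Ideal.span (leadingForm '' VSpace F i)

variable (F) in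
theorem exists_leadingForm_mem_leadingFormIdeal :
    ∃ d, ∀ f ∈ Ideal.span F, leadingForm f ∈ leadingFormIdeal F d := by
  obtain ⟨d, hd⟩ := monotone_stabilizes_iff_noetherian.2 inferInstance
    ⟨leadingFormIdeal F, fun _ _ hij => Ideal.span_mono (Set.image_mono (mono hij))⟩
  refine ⟨d, fun f hf => ?_⟩
  obtain ⟨i, hi⟩ := exists_mem_of_mem_span hf
  have : leadingForm f ∈ leadingFormIdeal F (max d i) :=
    Ideal.subset_span ⟨f, mono (le_max_right d i) hi, rfl⟩
  exact (hd _ (le_max_left d i)).ge this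

variable (F) in
noncomputable def topComponents (d n : ℕ) : Submodule k (MvPolynomial (Fin m) k) :=
  (VSpace F (max d n) ⊓ restrictTotalDegree (Fin m) k n).map (homogeneousComponent n)

theorem mul_mem_topComponents {H x : MvPolynomial (Fin m) k} {a d n : ℕ} (hH : H.IsHomogeneous a)
    (hx : x ∈ topComponents F d n) : H * x ∈ topComponents F d (a + n) := by
  obtain ⟨q, ⟨hqV, hqdeg⟩, rfl⟩ := hx
  rw [SetLike.mem_coe, mem_restrictTotalDegree] at hqdeg
  have hdeg : (H * q).totalDegree ≤ a + n :=
    (totalDegree_mul H q).trans (add_le_add hH.totalDegree_le hqdeg)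
  refine ⟨H * q, ⟨mul_mem (mono (by omega) hqV) H (hdeg.trans (le_max_right _ _)),
    (mem_restrictTotalDegree ..).2 hdeg⟩, ?_⟩
  simp [homogeneousComponent_mul_of_isHomogeneous_left hH]

variable (F) in
noncomputable def topComponentIdeal (d : ℕ) : Ideal (MvPolynomial (Fin m) k) where
  carrier := {g | ∀ n, homogeneousComponent n g ∈ topComponents F d n}
  add_mem' hg hh n := by simpa using add_mem (hg n) (hh n)
  zero_mem' n := by simp
  smul_mem' r g hg n := by
    rw [smul_eq_mul, ← sum_homogeneousComponent r, Finset.sum_mul, map_sum]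
    refine Submodule.sum_mem _ fun a _ => ?_
    have hr := homogeneousComponent_isHomogeneous a r
    rw [homogeneousComponent_mul_of_isHomogeneous_left hr]
    split_ifs with ha
    · simpa [Nat.add_sub_cancel' ha] using mul_mem_topComponents hr (hg (n - a))
    · exact zero_mem _

theorem leadingForm_mem_topComponentIdeal {p : MvPolynomial (Fin m) k} {d : ℕ}
    (hp : p ∈ VSpace F d) : leadingForm p ∈ topComponentIdeal F d := by
  intro n
  rw [homogeneousComponent_of_mem (leadingForm_isHomogeneous p)]
  split_ifs with h
  · subst h
    exact ⟨p, ⟨mono (le_max_left _ _) hp, (mem_restrictTotalDegree ..).2 le_rfl⟩, rfl⟩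
  · exact zero_mem _

theorem mem_max_totalDegree_of_leadingForm_mem {d : ℕ}
    (h : ∀ f ∈ Ideal.span F, leadingForm f ∈ topComponents F d f.totalDegree)
    {f : MvPolynomial (Fin m) k} (hf : f ∈ Ideal.span F) : f ∈ VSpace F (max d f.totalDegree) := by
  induction hn : f.totalDegree using Nat.strong_induction_on generalizing f with
  | _ n ih =>
    obtain ⟨q, ⟨hqV, hqdeg⟩, hq⟩ := h f hf
    rw [SetLike.mem_coe, mem_restrictTotalDegree, hn] at hqdeg
    rw [hn] at hqV hq
    by_cases hfq : f - q = 0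
    · rwa [sub_eq_zero.1 hfq]
    have hlt : (f - q).totalDegree < n := by
      refine totalDegree_lt_of_homogeneousComponent_eq_zero ?_ ?_ hfq
      · exact (totalDegree_sub f q).trans (max_le hn.le hqdeg)
      · rw [map_sub, hq, leadingForm, hn, sub_self]
    have hfq_mem := ih _ hlt (sub_mem hf (mem_span hqV)) rfl
    simpa using add_mem (mono (max_le_max le_rfl hlt.le) hfq_mem) hqV

variable (F) in
theorem exists_forall_mem_max_totalDegree :
    ∃ d, ∀ f ∈ Ideal.span F, f ∈ VSpace F (max d f.totalDegree) := by
  obtain ⟨d, hd⟩ := exists_leadingForm_mem_leadingFormIdeal F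
  have hle : leadingFormIdeal F d ≤ topComponentIdeal F d := Ideal.span_le.2 <| by
    rintro _ ⟨p, hp, rfl⟩
    exact leadingForm_mem_topComponentIdeal hp
  refine ⟨d, fun f hf => mem_max_totalDegree_of_leadingForm_mem (fun f hf => ?_) hf⟩
  simpa [homogeneousComponent_eq_self (leadingForm_isHomogeneous f)] using
    hle (hd f hf) f.totalDegree

theorem mem_of_forall_inter_eq {i j : ℕ}
    (hstab : ∀ c, j < c → (VSpace F c : Set (MvPolynomial (Fin m) k)) ∩
      {f | f.totalDegree ≤ c - 1} = VSpace F (c - 1))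
    (hji : j ≤ i) {f : MvPolynomial (Fin m) k} (hf : f ∈ VSpace F i) (hdeg : f.totalDegree ≤ j) :
    f ∈ VSpace F j := by
  induction i, hji using Nat.le_induction with
  | base => exact hf
  | succ i hji ih =>
    have : f ∈ (VSpace F (i + 1) : Set (MvPolynomial (Fin m) k)) ∩
        {f | f.totalDegree ≤ i + 1 - 1} := ⟨hf, by simp; omega⟩
    rw [hstab (i + 1) (by omega)] at this
    exact ih this

end VSpace

section lastFallDegree

variable {k : Type*} [Field k] {m : ℕ} {F : Set (MvPolynomial (Fin m) k)}

theorem mem_VSpace_max_lastFallDegree {f : MvPolynomial (Fin m) k} (hf : f ∈ Ideal.span F) :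
    f ∈ VSpace F (max (lastFallDegree F) f.totalDegree) :=
  Nat.sInf_mem (VSpace.exists_forall_mem_max_totalDegree F) f hf

theorem coe_VSpace_eq_of_lastFallDegree_le {i : ℕ} (hi : lastFallDegree F ≤ i) :
    (VSpace F i : Set (MvPolynomial (Fin m) k)) =
      (Ideal.span F : Set (MvPolynomial (Fin m) k)) ∩ {f | f.totalDegree ≤ i} := by
  ext f
  exact ⟨fun hf => ⟨VSpace.mem_span hf, VSpace.totalDegree_le hf⟩,
    fun ⟨hf, hdeg⟩ => VSpace.mono (max_le hi hdeg) (mem_VSpace_max_lastFallDegree hf)⟩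

theorem le_lastFallDegree_of_inter_ne {c : ℕ} (hc : 0 < c)
    (hne : (VSpace F c : Set (MvPolynomial (Fin m) k)) ∩ {f | f.totalDegree ≤ c - 1} ≠
      VSpace F (c - 1)) :
    c ≤ lastFallDegree F := by
  by_contra! hlt
  apply hne
  rw [coe_VSpace_eq_of_lastFallDegree_le hlt.le,
    coe_VSpace_eq_of_lastFallDegree_le (by omega : lastFallDegree F ≤ c - 1), Set.inter_assoc]
  congr 1
  ext f
  simp only [Set.mem_inter_iff, Set.mem_ofPred_eq]
  omega

theorem lastFallDegree_le_of_forall_inter_eq {j : ℕ}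
    (hstab : ∀ c, j < c → (VSpace F c : Set (MvPolynomial (Fin m) k)) ∩
      {f | f.totalDegree ≤ c - 1} = VSpace F (c - 1)) :
    lastFallDegree F ≤ j := by
  refine Nat.sInf_le fun f hf => VSpace.mem_of_forall_inter_eq (fun c hc => hstab c (by omega))
    (le_max_right (lastFallDegree F) _)
    (VSpace.mono (max_le_max le_rfl (le_max_right _ _)) (mem_VSpace_max_lastFallDegree hf))
    (le_max_right _ _)

end lastFallDegree

theorem lastFallDegree_spec_general {k : Type*} [Field k] {m : ℕ}
    (F : Set (MvPolynomial (Fin m) k)) :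
    (∀ i : ℕ, lastFallDegree F ≤ i →
      (VSpace F i : Set (MvPolynomial (Fin m) k)) =
        ((Ideal.span F : Ideal (MvPolynomial (Fin m) k)) : Set (MvPolynomial (Fin m) k)) ∩ {f : MvPolynomial (Fin m) k | f.totalDegree ≤ i}) ∧
    lastFallDegree F = sSup {c : ℕ | 0 < c ∧
      (VSpace F c : Set (MvPolynomial (Fin m) k)) ∩ {f : MvPolynomial (Fin m) k | f.totalDegree ≤ c - 1} ≠
        (VSpace F (c - 1) : Set (MvPolynomial (Fin m) k))} := by
  refine ⟨fun i => coe_VSpace_eq_of_lastFallDegree_le, le_antisymm ?_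
    (csSup_le' fun c hc => le_lastFallDegree_of_inter_ne hc.1 hc.2)⟩
  refine lastFallDegree_le_of_forall_inter_eq fun c hc => ?_
  by_contra hne
  exact notMem_of_csSup_lt hc ⟨_, fun c hc => le_lastFallDegree_of_inter_ne hc.1 hc.2⟩
    ⟨by omega, hne⟩

/-- For `i ≥ d_F` one has `VSpace F i = I ∩ R_{≤ i}`, and `d_F` is the
largest `c` such that `VSpace F c ∩ R_{≤ c-1} ≠ VSpace F (c-1)` (with the convention
`V_{F,-1} = ∅`, so only `c ≥ 1` can qualify, and `d_F = 0` if no such `c` exists). -/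
theorem lastFallDegree_spec {k : Type*} [Field k] {m : ℕ}
    (F : Set (MvPolynomial (Fin m) k)) (hF : F.Finite) :
    (∀ i : ℕ, lastFallDegree F ≤ i →
      (VSpace F i : Set (MvPolynomial (Fin m) k)) =
        ((Ideal.span F : Ideal (MvPolynomial (Fin m) k)) : Set (MvPolynomial (Fin m) k)) ∩ {f : MvPolynomial (Fin m) k | f.totalDegree ≤ i}) ∧
    lastFallDegree F = sSup {c : ℕ | 0 < c ∧
      (VSpace F c : Set (MvPolynomial (Fin m) k)) ∩ {f : MvPolynomial (Fin m) k | f.totalDegree ≤ c - 1} ≠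
        (VSpace F (c - 1) : Set (MvPolynomial (Fin m) k))} :=
  lastFallDegree_spec_general F
end

section
/- Let q be a prime power, n ≥ 1, k a finite field of cardinality q^n, and F ⊆ k[X_0,...,X_{m-1}] a finite set. There is a bijection between the common zeros in k^m of F ∪ {X_i^{q^n} − X_i} and the common zeros in (k')^{mn} of the Weil descent system F' ∪ {X_{ij}^q − X_{ij}}, where k' is the subfield of cardinality q, given by writing X_i = sum_j α_j X_{ij} for a fixed basis α_0,...,α_{n-1} of k over k'. -/
/-!
Evaluating at a point `y` of `(k')^{mn}` kills the field equations `X^q - X`, because every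
element of `k'` satisfies `a^q = a`; so the defining congruence of the `[f]_j` becomes the identity
`f(∑_j y_{ij} α_j) = ∑_j [f]_j(y) α_j` in `k`. By linear independence of the `α_j` the left side
vanishes iff every `[f]_j(y)` does. Finally `y ↦ (∑_j y_{ij} α_j)_i` is a bijection
`(k')^{mn} → k^m`, and the field equations hold identically on both sides.
-/

namespace MvPolynomial

noncomputable def fieldEquationIdeal (σ R : Type*) [CommRing R] (q : ℕ) :
    Ideal (MvPolynomial σ R) :=
  Ideal.span {g | ∃ p : σ, g = X p ^ q - X p}

variable {σ ι R A : Type*}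

theorem eval_eq_zero_of_mem_fieldEquationIdeal [CommRing R] {q : ℕ} {x : σ → R}
    (hx : ∀ p, x p ^ q = x p) {g : MvPolynomial σ R} (hg : g ∈ fieldEquationIdeal σ R q) :
    eval x g = 0 := by
  refine (Ideal.span_le (I := RingHom.ker (eval x))).2 ?_ hg
  rintro _ ⟨p, rfl⟩
  simp [hx]

theorem eval_aeval [CommSemiring R] {τ : Type*} (x : τ → R) (g : σ → MvPolynomial τ R)
    (f : MvPolynomial σ R) : eval x (aeval g f) = eval (fun i => eval x (g i)) f := by
  rw [aeval_eq_bind₁]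
  exact eval₂Hom_bind₁ _ _ _ _

theorem eval_map_algebraMap [CommSemiring R] [CommSemiring A] [Algebra R A] (y : σ → R)
    (f : MvPolynomial σ R) :
    eval (algebraMap R A ∘ y) (map (algebraMap R A) f) = algebraMap R A (eval y f) := by
  simpa using (eval₂_comp_left (algebraMap R A) (RingHom.id R) y f).symm

theorem eval_sum_smul_of_sub_mem_fieldEquationIdeal [Fintype ι] [CommRing R] [CommRing A]
    [Algebra R A] {q : ℕ} (b : ι → A) {f : MvPolynomial σ A} {g : ι → MvPolynomial (σ × ι) R}
    (hfg : aeval (fun i => ∑ j, C (b j) * X (i, j)) f - ∑ j, C (b j) * map (algebraMap R A) (g j)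
      ∈ fieldEquationIdeal (σ × ι) A q)
    {y : σ × ι → R} (hy : ∀ p, y p ^ q = y p) :
    eval (fun i => ∑ j, y (i, j) • b j) f = ∑ j, eval y (g j) • b j := by
  have h := eval_eq_zero_of_mem_fieldEquationIdeal (x := algebraMap R A ∘ y)
    (fun p => by simp [← map_pow, hy]) hfg
  rw [map_sub, sub_eq_zero, eval_aeval] at h
  simp only [map_sum, map_mul, eval_C, eval_X, eval_map_algebraMap, Function.comp_apply] at h
  simpa only [Algebra.smul_def, mul_comm] using h

end MvPolynomial

open MvPolynomial

theorem Module.Basis.bijective_sum_smul {σ ι R M : Type*} [Fintype ι] [CommSemiring R]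
    [AddCommMonoid M] [Module R M] (b : Module.Basis ι R M) :
    Function.Bijective fun y : σ × ι → R => fun i => ∑ j, y (i, j) • b j := by
  convert ((Equiv.curry σ ι R).trans
    (Equiv.piCongrRight fun _ => b.equivFun.symm.toEquiv)).bijective with y i
  simp [b.equivFun_symm_apply]

theorem Module.Basis.sum_smul_eq_zero_iff {ι R M : Type*} [Fintype ι] [Ring R]
    [AddCommGroup M] [Module R M] (b : Module.Basis ι R M) {c : ι → R} :
    ∑ j, c j • b j = 0 ↔ ∀ j, c j = 0 :=
  ⟨Fintype.linearIndependent_iff.1 b.linearIndependent c, fun h => by simp [h]⟩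

theorem weil_descent_zero_bijection_general {q n m : ℕ}
    {k' k : Type*} [Field k'] [Field k] [Fintype k'] [Fintype k] [Algebra k' k]
    (hcard' : Fintype.card k' = q) (hcard : Fintype.card k = q ^ n)
    (b : Module.Basis (Fin n) k' k)
    (F : Finset (MvPolynomial (Fin m) k))
    (Fd : MvPolynomial (Fin m) k → Fin n → MvPolynomial (Fin m × Fin n) k')
    (hFd : ∀ f ∈ F,
      MvPolynomial.aeval
          (fun i : Fin m => ∑ j : Fin n, MvPolynomial.C (b j) * MvPolynomial.X (i, j)) f
        - ∑ j : Fin n, MvPolynomial.C (b j) *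
            MvPolynomial.map (algebraMap k' k) (Fd f j)
      ∈ Ideal.span {g : MvPolynomial (Fin m × Fin n) k |
          ∃ p : Fin m × Fin n, g = MvPolynomial.X p ^ q - MvPolynomial.X p}) :
    Set.BijOn (fun y : Fin m × Fin n → k' => fun i : Fin m => ∑ j : Fin n, y (i, j) • b j)
      {y : Fin m × Fin n → k' |
        (∀ f ∈ F, ∀ j : Fin n, MvPolynomial.eval y (Fd f j) = 0) ∧
        ∀ p : Fin m × Fin n, y p ^ q - y p = 0}
      {x : Fin m → k |
        (∀ f ∈ F, MvPolynomial.eval x f = 0) ∧ ∀ i : Fin m, x i ^ q ^ n - x i = 0} := by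
  have hk' : ∀ a : k', a ^ q = a := fun a => hcard' ▸ FiniteField.pow_card a
  have hk : ∀ a : k, a ^ q ^ n = a := fun a => hcard ▸ FiniteField.pow_card a
  convert b.bijective_sum_smul.bijOn_preimage using 1
  ext y
  simp only [Set.mem_ofPred_eq, Set.mem_preimage, hk, hk', sub_self, implies_true, and_true]
  refine forall₂_congr fun f hf => ?_
  rw [eval_sum_smul_of_sub_mem_fieldEquationIdeal b (hFd f hf) fun p => hk' (y p),
    b.sum_smul_eq_zero_iff]

/-- Let `k'` be a finite field of cardinality `q`, `k` an extension of
cardinality `q^n` with basis `b : Fin n → k` over `k'`, and `F` a finite set of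
polynomials in `k[X_0,...,X_{m-1}]`. Let `Fd f j` (`j = 0,...,n-1`) be the Weil descent
components of `f`, characterized by
`f(∑_j b_j X_{0j}, ..., ∑_j b_j X_{m-1,j}) ≡ ∑_j b_j [f]_j mod (X_{ij}^q - X_{ij})`
with `deg_{X_{ij}}([f]_j) ≤ q - 1`. Then `y ↦ (∑_j y_{ij} b_j)_i` is a bijection from
the common zeros in `(k')^{mn}` of `F' ∪ {X_{ij}^q - X_{ij}}` to the common zeros in
`k^m` of `F ∪ {X_i^{q^n} - X_i}`. -/
theorem weil_descent_zero_bijection {q n m : ℕ} (hq : 1 < q) (hn : 0 < n)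
    {k' k : Type*} [Field k'] [Field k] [Fintype k'] [Fintype k] [Algebra k' k]
    (hcard' : Fintype.card k' = q) (hcard : Fintype.card k = q ^ n)
    (b : Module.Basis (Fin n) k' k)
    (F : Finset (MvPolynomial (Fin m) k))
    (Fd : MvPolynomial (Fin m) k → Fin n → MvPolynomial (Fin m × Fin n) k')
    (hFdeg : ∀ f ∈ F, ∀ j : Fin n, ∀ p : Fin m × Fin n, (Fd f j).degreeOf p ≤ q - 1)
    (hFd : ∀ f ∈ F,
      MvPolynomial.aeval
          (fun i : Fin m => ∑ j : Fin n, MvPolynomial.C (b j) * MvPolynomial.X (i, j)) f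
        - ∑ j : Fin n, MvPolynomial.C (b j) *
            MvPolynomial.map (algebraMap k' k) (Fd f j)
      ∈ Ideal.span {g : MvPolynomial (Fin m × Fin n) k |
          ∃ p : Fin m × Fin n, g = MvPolynomial.X p ^ q - MvPolynomial.X p}) :
    Set.BijOn (fun y : Fin m × Fin n → k' => fun i : Fin m => ∑ j : Fin n, y (i, j) • b j)
      {y : Fin m × Fin n → k' |
        (∀ f ∈ F, ∀ j : Fin n, MvPolynomial.eval y (Fd f j) = 0) ∧
        ∀ p : Fin m × Fin n, y p ^ q - y p = 0}
      {x : Fin m → k |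
        (∀ f ∈ F, MvPolynomial.eval x f = 0) ∧ ∀ i : Fin m, x i ^ q ^ n - x i = 0} :=
  weil_descent_zero_bijection_general hcard' hcard b F Fd hFd
end
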